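/- arXiv:1702.03095 — 3 statements merged into one kernel-verified Lean document; each statement's English description precedes it below -/
import Mathlib

section
/- Let J and D be Jacobi operators with spectral measures μ and ν respectively, and suppose the connection coefficient matrix C = C_{J→D} is banded with bandwidth b, i.e. c_{ij} = 0 whenever j − i > b. Set p_C = Σ_{k=0}^{b} c_{0k} P_k. Then ν is absolutely continuous with respect to μ with dν/dμ = p_C (μ-almost everywhere), and for every λ ∈ ℂ ∖ supp(μ): ∫ (s−λ)^{-1} dν(s) = p_C(λ) · ∫ (s−λ)^{-1} dμ(s) + ∫ (p_C(s) − p_C(λ))/(s−λ) dμ(s). -/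
open Polynomial MeasureTheory Filter Topology
open scoped ENNReal NNReal

noncomputable section

/-- Orthonormal polynomials of the Jacobi operator with diagonal `a` and off-diagonal `b`:
`P 0 = 1`, `P 1 = (X - a 0)/b 0`, and `X * P k = b (k-1) * P (k-1) + a k * P k + b k * P (k+1)`. -/
def orthPoly (a b : ℕ → ℝ) : ℕ → Polynomial ℝ
  | 0 => 1
  | 1 => Polynomial.C (b 0)⁻¹ * (Polynomial.X - Polynomial.C (a 0))
  | (k+2) => Polynomial.C (b (k+1))⁻¹ *
      ((Polynomial.X - Polynomial.C (a (k+1))) * orthPoly a b (k+1)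
        - Polynomial.C (b k) * orthPoly a b k)

/-- The (topological) support of a measure on ℝ: points all of whose neighbourhoods have
positive measure. -/
def measureSupport (μ : Measure ℝ) : Set ℝ := {x | ∀ U ∈ 𝓝 x, μ U ≠ 0}



lemma orthPoly_zero (a b : ℕ → ℝ) : orthPoly a b 0 = 1 := rfl
lemma orthPoly_one (a b : ℕ → ℝ) :
    orthPoly a b 1 = Polynomial.C (b 0)⁻¹ * (Polynomial.X - Polynomial.C (a 0)) := rfl
lemma orthPoly_two (a b : ℕ → ℝ) (k : ℕ) : orthPoly a b (k+2) = Polynomial.C (b (k+1))⁻¹ *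
      ((Polynomial.X - Polynomial.C (a (k+1))) * orthPoly a b (k+1)
        - Polynomial.C (b k) * orthPoly a b k) := rfl

lemma orthPoly_deg (a b : ℕ → ℝ) (hb : ∀ k, 0 < b k) :
    ∀ k, (orthPoly a b k).natDegree = k ∧ 0 < (orthPoly a b k).leadingCoeff := by
  have key : ∀ k, (orthPoly a b (k+1)).natDegree = k+1 ∧
      (orthPoly a b (k+1)).leadingCoeff = (b k)⁻¹ * (orthPoly a b k).leadingCoeff ∧
      (orthPoly a b k).natDegree = k ∧ 0 < (orthPoly a b k).leadingCoeff := by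
    intro k
    induction k with
    | zero =>
      have hb0 : ((b 0)⁻¹ : ℝ) ≠ 0 := by have := hb 0; positivity
      refine ⟨?_, ?_, ?_, ?_⟩
      · rw [orthPoly_one, natDegree_C_mul hb0, natDegree_X_sub_C]
      · rw [orthPoly_one, orthPoly_zero, leadingCoeff_mul, leadingCoeff_C,
          leadingCoeff_X_sub_C, leadingCoeff_one, mul_one]
      · rw [orthPoly_zero]; exact natDegree_one
      · rw [orthPoly_zero, leadingCoeff_one]; exact one_pos
    | succ k ih =>
      obtain ⟨hd1, hl1, hd0, hl0⟩ := ih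
      have hbk1 : ((b (k+1))⁻¹ : ℝ) ≠ 0 := by have := hb (k+1); positivity
      have hlpos : 0 < (orthPoly a b (k+1)).leadingCoeff := by
        rw [hl1]; have := hb k; positivity
      have hP1ne : orthPoly a b (k+1) ≠ 0 := leadingCoeff_ne_zero.mp hlpos.ne'
      have hmain : ((X - C (a (k+1))) * orthPoly a b (k+1)).natDegree = k+2 := by
        rw [natDegree_mul (X_sub_C_ne_zero _) hP1ne, natDegree_X_sub_C, hd1]
        omega
      have hlt : (C (b k) * orthPoly a b k).natDegree < k+2 := by
        calc (C (b k) * orthPoly a b k).natDegree ≤ (orthPoly a b k).natDegree :=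
              natDegree_C_mul_le _ _
        _ < k + 2 := by omega
      have hsub : ((X - C (a (k+1))) * orthPoly a b (k+1)
          - C (b k) * orthPoly a b k).natDegree = k+2 := by
        rw [natDegree_sub_eq_left_of_natDegree_lt (by rw [hmain]; exact hlt), hmain]
      have hcoeff : ((X - C (a (k+1))) * orthPoly a b (k+1)
          - C (b k) * orthPoly a b k).leadingCoeff = (orthPoly a b (k+1)).leadingCoeff := by
        have h2 := leadingCoeff_mul (X - C (a (k+1))) (orthPoly a b (k+1))
        rw [leadingCoeff_X_sub_C, one_mul] at h2
        rw [← h2]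
        unfold leadingCoeff
        rw [hsub, hmain, coeff_sub, coeff_eq_zero_of_natDegree_lt hlt, sub_zero]
      constructor
      · rw [orthPoly_two, natDegree_C_mul hbk1, hsub]
      refine ⟨?_, hd1, hlpos⟩
      rw [orthPoly_two, leadingCoeff_mul, leadingCoeff_C, hcoeff]
  intro k
  cases k with
  | zero => exact ⟨by rw [orthPoly_zero]; exact natDegree_one,
      by rw [orthPoly_zero, leadingCoeff_one]; exact one_pos⟩
  | succ k =>
    obtain ⟨hd1, hl1, _, hl0⟩ := key k
    exact ⟨hd1, by rw [hl1]; have := hb k; positivity⟩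

lemma orthPoly_span (a b : ℕ → ℝ) (hb : ∀ k, 0 < b k) (q : Polynomial ℝ) :
    q ∈ Submodule.span ℝ (Set.range (orthPoly a b)) := by
  have H : ∀ n (q : Polynomial ℝ), q.natDegree ≤ n →
      q ∈ Submodule.span ℝ (Set.range (orthPoly a b)) := by
    intro n
    induction n with
    | zero =>
      intro q hq
      have : q = q.coeff 0 • orthPoly a b 0 := by
        rw [orthPoly_zero, smul_eq_C_mul, mul_one]; exact eq_C_of_natDegree_le_zero hq
      rw [this]
      exact Submodule.smul_mem _ _ (Submodule.subset_span ⟨0, rfl⟩)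
    | succ n ih =>
      intro q hq
      obtain ⟨hd, hl⟩ := orthPoly_deg a b hb (n+1)
      set r := q - (q.coeff (n+1) / (orthPoly a b (n+1)).leadingCoeff) • orthPoly a b (n+1)
        with hr
      have hrc : r.coeff (n+1) = 0 := by
        simp only [hr, coeff_sub, coeff_smul, smul_eq_mul]
        rw [show (orthPoly a b (n+1)).coeff (n+1) = (orthPoly a b (n+1)).leadingCoeff by
          unfold leadingCoeff; rw [hd]]
        field_simp
        ring
      have hrd : r.natDegree ≤ n := by
        rw [natDegree_le_iff_coeff_eq_zero]
        intro m hm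
        rcases eq_or_lt_of_le (Nat.succ_le_of_lt hm) with h | h
        · rw [← h]; exact hrc
        · have h1 : q.natDegree < m := by omega
          have h2 : (orthPoly a b (n+1)).natDegree < m := by omega
          simp [hr, coeff_eq_zero_of_natDegree_lt h1, coeff_eq_zero_of_natDegree_lt h2]
      have hqr : q = r + (q.coeff (n+1) / (orthPoly a b (n+1)).leadingCoeff)
          • orthPoly a b (n+1) := by
        rw [hr]; ring
      rw [hqr]
      exact Submodule.add_mem _ (ih r hrd)
        (Submodule.smul_mem _ _ (Submodule.subset_span ⟨n+1, rfl⟩))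
  exact H q.natDegree q le_rfl



lemma measureSupport_compl_null (μ : Measure ℝ) : μ (measureSupport μ)ᶜ = 0 := by
  obtain ⟨B, hBc, -, hB⟩ := TopologicalSpace.exists_countable_basis ℝ
  have hsub : (measureSupport μ)ᶜ ⊆ ⋃₀ {b ∈ B | μ b = 0} := by
    intro x hx
    simp only [measureSupport, Set.mem_compl_iff, Set.mem_setOf_eq, not_forall] at hx
    obtain ⟨U, hU, hUz⟩ := hx
    push_neg at hUz
    obtain ⟨b, hbB, hxb, hbU⟩ := hB.mem_nhds_iff.mp hU
    exact ⟨b, ⟨hbB, le_antisymm (hUz ▸ measure_mono hbU) zero_le⟩, hxb⟩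
  refine measure_mono_null hsub ?_
  refine (measure_sUnion_null_iff ?_).mpr (fun s hs => hs.2)
  exact hBc.mono (Set.sep_subset _ _)

lemma measureSupport_subset {μ : Measure ℝ} {s : Set ℝ} (hs : IsClosed s) (h : μ sᶜ = 0) :
    measureSupport μ ⊆ s := by
  intro x hx
  by_contra hxs
  exact hx sᶜ (hs.isOpen_compl.mem_nhds hxs) h

lemma measureSupport_closed (μ : Measure ℝ) : IsClosed (measureSupport μ) := by
  rw [← isOpen_compl_iff]
  rw [isOpen_iff_mem_nhds]
  intro x hx
  simp only [measureSupport, Set.mem_compl_iff, Set.mem_setOf_eq, not_forall] at hx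
  obtain ⟨U, hU, hUz⟩ := hx
  push_neg at hUz
  obtain ⟨V, hVU, hVo, hxV⟩ := mem_nhds_iff.mp hU
  filter_upwards [hVo.mem_nhds hxV] with y hy
  simp only [measureSupport, Set.mem_compl_iff, Set.mem_setOf_eq, not_forall]
  exact ⟨V, hVo.mem_nhds hy, by push_neg; exact measure_mono_null hVU hUz⟩

lemma integrable_of_ae_bound {E : Type*} [NormedAddCommGroup E]
    {m : Measure ℝ} [IsFiniteMeasure m] {f : ℝ → E} (hf : AEStronglyMeasurable f m)
    {C : ℝ} (h : ∀ᵐ x ∂m, ‖f x‖ ≤ C) : Integrable f m :=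
  (integrable_const C).mono' hf h

lemma ae_mem_of_compl_null {m : Measure ℝ} {s : Set ℝ} (h : m sᶜ = 0) : ∀ᵐ x ∂m, x ∈ s :=
  ae_iff.mpr (by exact h)

/-- continuous functions are integrable against measures supported on a compact -/
lemma integrable_cont {E : Type*} [NormedAddCommGroup E]
    {m : Measure ℝ} [IsFiniteMeasure m] {s : Set ℝ} (hs : IsCompact s) (hm : m sᶜ = 0)
    {f : ℝ → E} (hf : Continuous f) : Integrable f m := by
  obtain ⟨C, hC⟩ := hs.exists_bound_of_continuousOn hf.continuousOn
  exact integrable_of_ae_bound hf.aestronglyMeasurable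
    ((ae_mem_of_compl_null hm).mono fun x hx => hC x hx)

/-- If `C_{J→D}` is banded with bandwidth `b`, then `ν ≪ μ` with
`dν/dμ = p_C` μ-a.e., where `p_C = Σ_{k≤b} c_{0k} P_k`, and for all `λ ∉ supp(μ)` the Stieltjes
transforms satisfy `H(λ) = p_C(λ) G(λ) + p_C^μ(λ)`. -/
theorem stmt6 (α β γ δ : ℕ → ℝ) (hβ : ∀ k, 0 < β k) (hδ : ∀ k, 0 < δ k)
    (c : ℕ → ℕ → ℝ)
    (hc : ∀ j, orthPoly α β j =
      ∑ i ∈ Finset.range (j+1), Polynomial.C (c i j) * orthPoly γ δ i)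
    (hc0 : ∀ i j, j < i → c i j = 0)
    (b : ℕ) (hband : ∀ i j, i + b < j → c i j = 0)
    (μ ν : Measure ℝ) [IsProbabilityMeasure μ] [IsProbabilityMeasure ν]
    (hμcomp : ∃ s : Set ℝ, IsCompact s ∧ μ sᶜ = 0)
    (hνcomp : ∃ s : Set ℝ, IsCompact s ∧ ν sᶜ = 0)
    (hμorth : ∀ j k, ∫ s, (orthPoly α β j).eval s * (orthPoly α β k).eval s ∂μ
      = if j = k then 1 else 0)
    (hνorth : ∀ j k, ∫ s, (orthPoly γ δ j).eval s * (orthPoly γ δ k).eval s ∂ν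
      = if j = k then 1 else 0) :
    ν ≪ μ ∧
    (∀ᵐ s ∂μ, (ν.rnDeriv μ s).toReal
      = (∑ k ∈ Finset.range (b+1), Polynomial.C (c 0 k) * orthPoly α β k).eval s) ∧
    (∀ lam : ℂ, lam ∉ Complex.ofReal '' measureSupport μ →
      ∫ s, ((s : ℂ) - lam)⁻¹ ∂ν
        = Polynomial.aeval lam (∑ k ∈ Finset.range (b+1), Polynomial.C (c 0 k) * orthPoly α β k)
            * ∫ s, ((s : ℂ) - lam)⁻¹ ∂μ
          + ∫ s, (Polynomial.aeval ((s : ℂ))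
                (∑ k ∈ Finset.range (b+1), Polynomial.C (c 0 k) * orthPoly α β k)
              - Polynomial.aeval lam
                (∑ k ∈ Finset.range (b+1), Polynomial.C (c 0 k) * orthPoly α β k))
              / ((s : ℂ) - lam) ∂μ) := by
  obtain ⟨sμ, hsμc, hsμ⟩ := hμcomp
  obtain ⟨sν, hsνc, hsν⟩ := hνcomp
  set p : Polynomial ℝ := ∑ k ∈ Finset.range (b+1), Polynomial.C (c 0 k) * orthPoly α β k
    with hp
  have intν : ∀ f : ℝ → ℝ, Continuous f → Integrable f ν := fun f hf =>
    integrable_cont hsνc hsν hf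
  have intμ : ∀ f : ℝ → ℝ, Continuous f → Integrable f μ := fun f hf =>
    integrable_cont hsμc hsμ hf
  -- moments of Q against ν
  have hQν : ∀ i, ∫ s, (orthPoly γ δ i).eval s ∂ν = if i = 0 then 1 else 0 := by
    intro i
    have := hνorth i 0
    simpa [orthPoly_zero] using this
  -- moments of P against ν
  have hPν : ∀ j, ∫ s, (orthPoly α β j).eval s ∂ν = c 0 j := by
    intro j
    rw [hc j]
    simp only [eval_finset_sum, eval_mul, eval_C]
    rw [integral_finset_sum _ (fun i _ => ((intν _ (orthPoly γ δ i).continuous).const_mul _))]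
    simp only [integral_const_mul, hQν]
    rw [Finset.sum_eq_single_of_mem 0 (Finset.mem_range.mpr (Nat.succ_pos j))]
    · simp
    · intro i _ hi; simp [hi]
  -- moments of P against p·μ
  have hPμp : ∀ j, ∫ s, (orthPoly α β j).eval s * p.eval s ∂μ = c 0 j := by
    intro j
    simp only [hp, eval_finset_sum, eval_mul, eval_C, Finset.mul_sum]
    rw [integral_finset_sum _ (fun k _ => ?_)]
    swap
    · exact intμ _ ((orthPoly α β j).continuous.mul (continuous_const.mul (orthPoly α β k).continuous))
    simp only [show ∀ k s, (orthPoly α β j).eval s * (c 0 k * (orthPoly α β k).eval s)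
        = c 0 k * ((orthPoly α β j).eval s * (orthPoly α β k).eval s) from
        fun k s => by ring]
    simp only [integral_const_mul, hμorth]
    simp only [mul_ite, mul_one, mul_zero]
    rw [Finset.sum_ite_eq (Finset.range (b+1)) j (fun k => c 0 k)]
    by_cases hj : j ∈ Finset.range (b+1)
    · simp [hj]
    · rw [if_neg hj]
      rw [Finset.mem_range] at hj
      exact (hband 0 j (by omega)).symm
  -- moment equality extends to all polynomials
  have key : ∀ q : Polynomial ℝ, ∫ s, q.eval s ∂ν = ∫ s, q.eval s * p.eval s ∂μ := by
    intro q
    have hq := orthPoly_span α β hβ q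
    induction hq using Submodule.span_induction with
    | mem x hx =>
      obtain ⟨j, rfl⟩ := hx
      rw [hPν j, hPμp j]
    | zero => simp
    | add x y hx hy ihx ihy =>
      simp only [eval_add, add_mul]
      rw [integral_add (intν _ x.continuous) (intν _ y.continuous),
        integral_add (intμ (fun s => x.eval s * p.eval s) (x.continuous.mul p.continuous))
          (intμ (fun s => y.eval s * p.eval s) (y.continuous.mul p.continuous)), ihx, ihy]
    | smul r x hx ihx =>
      simp only [eval_smul, smul_eq_mul, mul_assoc]
      rw [integral_const_mul, integral_const_mul, ihx]
  -- Stone-Weierstrass: equality for all continuous functions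
  set K : Set ℝ := sμ ∪ sν with hK
  have hKc : IsCompact K := hsμc.union hsνc
  haveI : CompactSpace ↥K := isCompact_iff_compactSpace.mp hKc
  have hμK : μ Kᶜ = 0 := measure_mono_null (Set.compl_subset_compl.mpr Set.subset_union_left) hsμ
  have hνK : ν Kᶜ = 0 := measure_mono_null (Set.compl_subset_compl.mpr Set.subset_union_right) hsν
  obtain ⟨Mp0, hMp0⟩ := hKc.exists_bound_of_continuousOn p.continuous.continuousOn
  set Mp : ℝ := max Mp0 0 with hMpdef
  have hMp : ∀ x ∈ K, ‖p.eval x‖ ≤ Mp := fun x hx => le_trans (hMp0 x hx) (le_max_left _ _)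
  have hMpnn : 0 ≤ Mp := le_max_right _ _
  have keyf : ∀ f : ℝ → ℝ, Continuous f →
      ∫ s, f s ∂ν = ∫ s, f s * p.eval s ∂μ := by
    intro f hf
    set A := ∫ s, f s ∂ν with hA
    set B := ∫ s, f s * p.eval s ∂μ with hB
    have hest : ∀ ε : ℝ, 0 < ε → |A - B| ≤ ε * (1 + Mp) := by
      intro ε hε
      set fK : C(K, ℝ) := ⟨fun x => f x, hf.comp continuous_subtype_val⟩ with hfK
      have h1 : fK ∈ closure (polynomialFunctions K : Set C(K, ℝ)) := by
        rw [← Subalgebra.topologicalClosure_coe, polynomialFunctions.topologicalClosure K]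
        exact Algebra.mem_top
      obtain ⟨g, hg, hdist⟩ := Metric.mem_closure_iff.mp h1 ε hε
      rw [polynomialFunctions_coe] at hg
      obtain ⟨q, rfl⟩ := hg
      have happrox : ∀ x (hx : x ∈ K), ‖f x - q.eval x‖ ≤ ε := by
        intro x hx
        have := ContinuousMap.dist_apply_le_dist (f := fK)
          (g := Polynomial.toContinuousMapOnAlgHom K q) ⟨x, hx⟩
        rw [Real.dist_eq] at this
        exact le_trans this hdist.le
      have e1 : ‖A - ∫ s, q.eval s ∂ν‖ ≤ ε := by
        rw [hA, ← integral_sub (intν f hf) (intν _ q.continuous)]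
        calc ‖∫ s, (f s - q.eval s) ∂ν‖ ≤ ε * (ν Set.univ).toReal := by
              apply norm_integral_le_of_norm_le_const
              filter_upwards [ae_mem_of_compl_null hνK] with x hx
              exact happrox x hx
          _ = ε := by simp
      have e2 : ‖(∫ s, q.eval s * p.eval s ∂μ) - B‖ ≤ ε * Mp := by
        rw [hB, ← integral_sub (intμ (fun s => q.eval s * p.eval s) (q.continuous.mul p.continuous))
          (intμ (fun s => f s * p.eval s) (hf.mul p.continuous))]
        calc ‖∫ s, (q.eval s * p.eval s - f s * p.eval s) ∂μ‖
            ≤ (ε * Mp) * (μ Set.univ).toReal := by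
              apply norm_integral_le_of_norm_le_const
              filter_upwards [ae_mem_of_compl_null hμK] with x hx
              have : q.eval x * p.eval x - f x * p.eval x = -((f x - q.eval x) * p.eval x) := by
                ring
              rw [this, norm_neg, norm_mul]
              exact mul_le_mul (happrox x hx) (hMp x hx) (norm_nonneg _) hε.le
          _ = ε * Mp := by simp
      calc |A - B| = ‖(A - ∫ s, q.eval s ∂ν) + ((∫ s, q.eval s * p.eval s ∂μ) - B)‖ := by
            rw [key q]; congr 1; ring
        _ ≤ ‖A - ∫ s, q.eval s ∂ν‖ + ‖(∫ s, q.eval s * p.eval s ∂μ) - B‖ := norm_add_le _ _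
        _ ≤ ε + ε * Mp := add_le_add e1 e2
        _ = ε * (1 + Mp) := by ring
    have : |A - B| ≤ 0 := by
      apply le_of_forall_pos_le_add
      intro ε hε
      have h1Mp : (0:ℝ) < 1 + Mp := by linarith
      calc |A - B| ≤ (ε / (1 + Mp)) * (1 + Mp) := hest _ (by positivity)
        _ = ε := by field_simp
        _ ≤ 0 + ε := by linarith
    have h0 : A - B = 0 := abs_eq_zero.mp (le_antisymm this (abs_nonneg _))
    linarith
  -- p is nonnegative a.e. μ
  have hpnn : ∀ᵐ x ∂μ, 0 ≤ p.eval x := by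
    set g : ℝ → ℝ := fun x => min (max (-p.eval x) 0) Mp with hg
    have hgc : Continuous g := (p.continuous.neg.max continuous_const).min continuous_const
    have hgnn : ∀ x, 0 ≤ g x := fun x => le_min (le_max_right _ _) hMpnn
    have hgK : ∀ x ∈ K, g x = max (-p.eval x) 0 := by
      intro x hx
      apply min_eq_left
      apply max_le _ hMpnn
      calc -p.eval x ≤ ‖p.eval x‖ := by
            rw [Real.norm_eq_abs]; exact neg_le_abs _
        _ ≤ Mp := hMp x hx
    have h1 : (0:ℝ) ≤ ∫ s, g s ∂ν := integral_nonneg hgnn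
    have h2 : ∫ s, g s * p.eval s ∂μ = - ∫ s, (g s)^2 ∂μ := by
      rw [← integral_neg]
      apply integral_congr_ae
      filter_upwards [ae_mem_of_compl_null hμK] with x hx
      rw [hgK x hx]
      rcases le_or_gt 0 (p.eval x) with h | h
      · rw [max_eq_right (by linarith)]; ring
      · rw [max_eq_left (by linarith)]; ring
    have h3 : ∫ s, (g s)^2 ∂μ = 0 := by
      have h4 := keyf g hgc
      rw [h2] at h4
      have h5 : (0:ℝ) ≤ ∫ s, (g s)^2 ∂μ := integral_nonneg (fun x => sq_nonneg _)
      linarith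
    have h6 : (fun s => (g s)^2) =ᵐ[μ] 0 := by
      rw [← integral_eq_zero_iff_of_nonneg (fun x => sq_nonneg _)
        (intμ _ (hgc.pow 2))]
      exact h3
    filter_upwards [h6, ae_mem_of_compl_null hμK] with x hx2 hxK
    have : g x = 0 := by
      have := sq_eq_zero_iff.mp hx2
      exact this
    rw [hgK x hxK] at this
    by_contra hcon
    push_neg at hcon
    rw [max_eq_left (by linarith)] at this
    linarith
  -- identify ν with the density measure
  have hmeas : Measurable (fun x => ENNReal.ofReal (p.eval x)) :=
    ENNReal.measurable_ofReal.comp p.continuous.measurable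
  have hνρ : ν = μ.withDensity (fun x => ENNReal.ofReal (p.eval x)) := by
    apply ext_of_forall_lintegral_eq_of_IsFiniteMeasure
    intro f
    have hfrc : Continuous (fun x => (f x : ℝ)) := NNReal.continuous_coe.comp f.continuous
    rw [lintegral_coe_eq_integral f (intν _ hfrc), keyf _ hfrc,
      ofReal_integral_eq_lintegral_ofReal (intμ (fun x => (f x : ℝ) * p.eval x) (hfrc.mul p.continuous))
        (by filter_upwards [hpnn] with x hx; exact mul_nonneg (f x).coe_nonneg hx),
      lintegral_withDensity_eq_lintegral_mul μ hmeas
        (show Measurable fun x : ℝ => ((f x : ℝ≥0∞)) from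
          measurable_coe_nnreal_ennreal.comp f.continuous.measurable)]
    apply lintegral_congr
    intro x
    simp only [Pi.mul_apply]
    rw [ENNReal.ofReal_mul (f x).coe_nonneg, ENNReal.ofReal_coe_nnreal, mul_comm]
  -- Stieltjes transform identity
  have stielt : ∀ lam : ℂ, lam ∉ Complex.ofReal '' measureSupport μ →
      ∫ s, ((s : ℂ) - lam)⁻¹ ∂ν
        = Polynomial.aeval lam p * ∫ s, ((s : ℂ) - lam)⁻¹ ∂μ
          + ∫ s, (Polynomial.aeval ((s : ℂ)) p - Polynomial.aeval lam p)
              / ((s : ℂ) - lam) ∂μ := by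
    intro lam hlam
    set S : Set ℝ := measureSupport μ with hS
    have hSsub : S ⊆ sμ := measureSupport_subset hsμc.isClosed hsμ
    have hSnull : μ Sᶜ = 0 := measureSupport_compl_null μ
    -- distance bound
    obtain ⟨d, hd, hdist⟩ : ∃ d > (0:ℝ), ∀ x ∈ S, d ≤ ‖(x : ℂ) - lam‖ := by
      set T : Set ℂ := Complex.ofReal '' S with hT
      have hTc : IsCompact T :=
        ((hsμc.of_isClosed_subset (measureSupport_closed μ) hSsub).image
          Complex.continuous_ofReal)
      rcases Set.eq_empty_or_nonempty T with h | h
      · exact ⟨1, one_pos, fun x hx => absurd (Set.mem_image_of_mem _ hx)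
          (by rw [← hT, h]; exact Set.notMem_empty _)⟩
      · have hpos : 0 < Metric.infDist lam T :=
          (hTc.isClosed.notMem_iff_infDist_pos h).mp hlam
        refine ⟨Metric.infDist lam T, hpos, fun x hx => ?_⟩
        have := Metric.infDist_le_dist_of_mem (x := lam)
          (Set.mem_image_of_mem Complex.ofReal hx)
        rwa [dist_eq_norm, norm_sub_rev] at this
    have haeS : ∀ᵐ x ∂μ, x ∈ S := ae_mem_of_compl_null hSnull
    -- basic integrands
    set w : ℝ → ℂ := fun s => ((s : ℂ) - lam)⁻¹ with hw
    have hwm : Measurable w := (Complex.measurable_ofReal.sub measurable_const).inv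
    have hwb : ∀ᵐ s ∂μ, ‖w s‖ ≤ d⁻¹ := by
      filter_upwards [haeS] with x hx
      rw [hw, norm_inv]
      exact inv_anti₀ hd (hdist x hx)
    have hwint : Integrable w μ := integrable_of_ae_bound hwm.aestronglyMeasurable hwb
    -- the complex polynomial evaluations
    have haev : ∀ s : ℝ, Polynomial.aeval ((s:ℂ)) p = ((p.eval s : ℝ) : ℂ) := by
      intro s
      rw [← Complex.coe_algebraMap, aeval_algebraMap_apply_eq_algebraMap_eval]
    set Pl : ℂ := Polynomial.aeval lam p with hPl
    have hgm : Measurable fun s : ℝ => ((p.eval s : ℝ) : ℂ) :=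
      Complex.measurable_ofReal.comp p.continuous.measurable
    have hint2 : Integrable (fun s => (((p.eval s : ℝ) : ℂ) - Pl) * w s) μ := by
      apply integrable_of_ae_bound (((hgm.sub measurable_const).mul hwm).aestronglyMeasurable)
        (C := (Mp + ‖Pl‖) * d⁻¹)
      filter_upwards [haeS, hwb] with x hx hwx
      simp only [Pi.mul_apply, Pi.sub_apply, norm_mul]
      apply mul_le_mul _ hwx (norm_nonneg _) (by positivity)
      calc ‖((p.eval x : ℝ) : ℂ) - Pl‖ ≤ ‖((p.eval x : ℝ) : ℂ)‖ + ‖Pl‖ := norm_sub_le _ _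
        _ ≤ Mp + ‖Pl‖ := by
            have : ‖((p.eval x : ℝ) : ℂ)‖ = ‖p.eval x‖ := Complex.norm_real _
            rw [this]
            exact add_le_add_left (hMp x (Set.mem_union_left _ (hSsub hx))) _
    -- rewrite the ν-integral via the density
    have hLHS : ∫ s, w s ∂ν = ∫ s, ((p.eval s : ℝ) : ℂ) * w s ∂μ := by
      rw [hνρ]
      have : (fun x => ENNReal.ofReal (p.eval x))
          = fun x => ((Real.toNNReal (p.eval x) : ℝ≥0) : ℝ≥0∞) := rfl
      rw [this, integral_withDensity_eq_integral_smul
        (f := fun x => Real.toNNReal (p.eval x))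
        (by exact measurable_real_toNNReal.comp p.continuous.measurable) w]
      apply integral_congr_ae
      filter_upwards [hpnn] with x hx
      rw [NNReal.smul_def, Real.coe_toNNReal _ hx, Complex.real_smul]
    -- split the μ-integral
    have hsplit : ∫ s, ((p.eval s : ℝ) : ℂ) * w s ∂μ
        = Pl * ∫ s, w s ∂μ + ∫ s, (((p.eval s : ℝ) : ℂ) - Pl) * w s ∂μ := by
      rw [← integral_const_mul, ← integral_add (hwint.const_mul Pl) hint2]
      apply integral_congr_ae
      filter_upwards [] with x
      ring
    rw [hLHS, hsplit]
    congr 1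
    apply integral_congr_ae
    filter_upwards [] with x
    rw [haev x, div_eq_mul_inv]
  refine ⟨?_, ?_, stielt⟩
  · rw [hνρ]; exact withDensity_absolutelyContinuous μ _
  · have hrn : ν.rnDeriv μ =ᵐ[μ] fun x => ENNReal.ofReal (p.eval x) := by
      rw [hνρ]; exact Measure.rnDeriv_withDensity μ hmeas
    filter_upwards [hrn, hpnn] with x h1 h2
    rw [h1, ENNReal.toReal_ofReal h2]

end
end

section
/- Let J and D be Jacobi operators with coefficients (α_k, β_k) and (γ_k, δ_k) respectively, and suppose there exists n such that for all k ≥ n: α_k = γ_k = α_n and β_{k−1} = δ_{k−1} = β_{n−1}. Then the entries of the connection coefficient matrix C = C_{J→D} satisfy c_{i,j} = c_{i−1,j−1} for all i, j ≥ 1 with i ≥ n. -/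
open Polynomial MeasureTheory Filter Topology

noncomputable section

lemma orthPoly_deg_coeff (a b : ℕ → ℝ) :
    ∀ k, (orthPoly a b k).natDegree ≤ k ∧
      (orthPoly a b k).coeff k = (∏ m ∈ Finset.range k, b m)⁻¹ := by
  intro k
  induction k using Nat.strong_induction_on with
  | _ k ih =>
    match k with
    | 0 => simp [orthPoly]
    | 1 =>
      constructor
      · refine le_trans (natDegree_C_mul_le _ _) ?_
        simpa using natDegree_X_sub_C_le (a 0)
      · simp [orthPoly, coeff_C_mul, coeff_X, coeff_C]
    | (k+2) =>
      obtain ⟨hd1, hc1⟩ := ih (k+1) (by omega)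
      obtain ⟨hd0, _⟩ := ih k (by omega)
      constructor
      · show (Polynomial.C (b (k+1))⁻¹ *
          ((X - C (a (k+1))) * orthPoly a b (k+1) - C (b k) * orthPoly a b k)).natDegree ≤ k+2
        refine le_trans (natDegree_C_mul_le _ _) ?_
        refine le_trans (natDegree_sub_le _ _) ?_
        refine max_le ?_ ?_
        · refine le_trans (natDegree_mul_le) ?_
          have := natDegree_X_sub_C_le (a (k+1))
          omega
        · refine le_trans (natDegree_C_mul_le _ _) (by omega)
      · show (Polynomial.C (b (k+1))⁻¹ *
          ((X - C (a (k+1))) * orthPoly a b (k+1) - C (b k) * orthPoly a b k)).coeff (k+2)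
          = (∏ m ∈ Finset.range (k+2), b m)⁻¹
        have h1 : (orthPoly a b (k+1)).coeff (k+2) = 0 :=
          coeff_eq_zero_of_natDegree_lt (by omega)
        have h0 : (orthPoly a b k).coeff (k+2) = 0 :=
          coeff_eq_zero_of_natDegree_lt (by omega)
        rw [coeff_C_mul, coeff_sub, coeff_C_mul, h0, sub_mul, coeff_sub, coeff_C_mul, h1]
        rw [show ((k:ℕ)+2) = (k+1)+1 from rfl, coeff_X_mul, hc1]
        simp only [Finset.prod_range_succ, mul_inv]
        ring

lemma orthPoly_indep (a b : ℕ → ℝ) (hb : ∀ k, 0 < b k) :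
    ∀ N (f : ℕ → ℝ),
      (∑ i ∈ Finset.range (N+1), C (f i) * orthPoly a b i) = 0 → ∀ i ≤ N, f i = 0 := by
  intro N
  induction N with
  | zero =>
    intro f h i hi
    interval_cases i
    have : C (f 0) = 0 := by simpa [orthPoly] using h
    simpa using this
  | succ N ihN =>
    intro f h i hi
    have hprod : (∏ m ∈ Finset.range (N+1), b m) ≠ 0 :=
      ne_of_gt (Finset.prod_pos (fun m _ => hb m))
    have htop : f (N+1) = 0 := by
      have hco := congrArg (fun p => p.coeff (N+1)) h
      simp only [finset_sum_coeff, coeff_C_mul, coeff_zero] at hco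
      rw [Finset.sum_range_succ] at hco
      have hz : ∑ i ∈ Finset.range (N+1), f i * (orthPoly a b i).coeff (N+1) = 0 := by
        refine Finset.sum_eq_zero fun i hmem => ?_
        have : (orthPoly a b i).coeff (N+1) = 0 :=
          coeff_eq_zero_of_natDegree_lt
            (lt_of_le_of_lt (orthPoly_deg_coeff a b i).1 (Finset.mem_range.mp hmem))
        rw [this, mul_zero]
      rw [hz, zero_add, (orthPoly_deg_coeff a b (N+1)).2] at hco
      have := mul_eq_zero.mp hco
      rcases this with h' | h'
      · exact h'
      · exact absurd h' (inv_ne_zero hprod)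
    rcases Nat.lt_succ_iff_lt_or_eq.mp (Nat.lt_succ_of_le hi) with h' | h'
    · refine ihN f ?_ i (by omega)
      rw [Finset.sum_range_succ, htop] at h
      simpa using h
    · rw [h', htop]

lemma orthPoly_rec (a b : ℕ → ℝ) (hb : ∀ k, 0 < b k) (k : ℕ) :
    X * orthPoly a b (k+1) = C (b k) * orthPoly a b k + C (a (k+1)) * orthPoly a b (k+1)
      + C (b (k+1)) * orthPoly a b (k+2) := by
  have h : C (b (k+1)) * orthPoly a b (k+2)
      = (X - C (a (k+1))) * orthPoly a b (k+1) - C (b k) * orthPoly a b k := by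
    show C (b (k+1)) * (C (b (k+1))⁻¹ * _) = _
    rw [← mul_assoc, ← C_mul, mul_inv_cancel₀ (ne_of_gt (hb (k+1))), C_1, one_mul]
  rw [h]; ring

section Key
variable (α β γ δ : ℕ → ℝ) (hβ : ∀ k, 0 < β k) (hδ : ∀ k, 0 < δ k)
  (c : ℕ → ℕ → ℝ)
  (hc : ∀ j, orthPoly α β j =
      ∑ i ∈ Finset.range (j+1), Polynomial.C (c i j) * orthPoly γ δ i)
  (hc0 : ∀ i j, j < i → c i j = 0)

include hc hc0 in
lemma hc_pad : ∀ j N, j < N → orthPoly α β j =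
    ∑ i ∈ Finset.range N, Polynomial.C (c i j) * orthPoly γ δ i := by
  intro j N hjN
  rw [hc j]
  refine Finset.sum_subset (by intro x hx; simp at hx ⊢; omega) ?_
  intro x hx hnx
  simp only [Finset.mem_range] at hx hnx
  rw [hc0 x j (by omega), C_0, zero_mul]

include hβ hδ hc hc0 in
lemma keyrec : ∀ j i,
    β j * c (i+1) j + α (j+1) * c (i+1) (j+1) + β (j+1) * c (i+1) (j+2)
    = δ i * c i (j+1) + γ (i+1) * c (i+1) (j+1) + δ (i+1) * c (i+2) (j+1) := by
  intro j i
  set L : ℕ → ℝ := fun m => β j * c m j + α (j+1) * c m (j+1) + β (j+1) * c m (j+2) with hL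
  set R : ℕ → ℝ := fun m => (if m = 0 then 0 else δ (m-1) * c (m-1) (j+1))
      + γ m * c m (j+1) + δ m * c (m+1) (j+1) with hR
  have XQ : ∀ m, X * orthPoly γ δ m
      = C (if m = 0 then 0 else δ (m-1)) * orthPoly γ δ (m-1)
      + C (γ m) * orthPoly γ δ m + C (δ m) * orthPoly γ δ (m+1) := by
    intro m
    match m with
    | 0 =>
      have h0 : (if (0:ℕ) = 0 then (0:ℝ) else δ (0-1)) = 0 := if_pos rfl
      rw [h0, C_0, zero_mul, zero_add]
      have h : C (δ 0) * orthPoly γ δ 1 = X - C (γ 0) := by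
        show C (δ 0) * (C (δ 0)⁻¹ * _) = _
        rw [← mul_assoc, ← C_mul, mul_inv_cancel₀ (ne_of_gt (hδ 0)), C_1, one_mul]
      rw [h]
      show X * 1 = C (γ 0) * 1 + (X - C (γ 0))
      ring
    | (m+1) =>
      simp only [Nat.add_sub_cancel, if_neg (Nat.succ_ne_zero m)]
      exact orthPoly_rec γ δ hδ m
  -- expansion via the P recurrence
  have hLeq : X * orthPoly α β (j+1)
      = ∑ m ∈ Finset.range (j+3), C (L m) * orthPoly γ δ m := by
    rw [orthPoly_rec α β hβ j]
    rw [hc_pad α β γ δ c hc hc0 j (j+3) (by omega),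
        hc_pad α β γ δ c hc hc0 (j+1) (j+3) (by omega),
        hc_pad α β γ δ c hc hc0 (j+2) (j+3) (by omega)]
    rw [Finset.mul_sum, Finset.mul_sum, Finset.mul_sum, ← Finset.sum_add_distrib,
        ← Finset.sum_add_distrib]
    refine Finset.sum_congr rfl fun m _ => ?_
    simp only [hL, C_add, C_mul]
    ring
  -- expansion via the Q recurrence
  have hReq : X * orthPoly α β (j+1)
      = ∑ m ∈ Finset.range (j+3), C (R m) * orthPoly γ δ m := by
    rw [hc_pad α β γ δ c hc hc0 (j+1) (j+2) (by omega), Finset.mul_sum]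
    have step : ∀ m, X * (C (c m (j+1)) * orthPoly γ δ m)
        = C ((if m = 0 then 0 else δ (m-1)) * c m (j+1)) * orthPoly γ δ (m-1)
          + C (γ m * c m (j+1)) * orthPoly γ δ m
          + C (δ m * c m (j+1)) * orthPoly γ δ (m+1) := by
      intro m
      rw [mul_left_comm, XQ m]
      simp only [C_mul]
      ring
    rw [Finset.sum_congr rfl fun m _ => step m]
    rw [Finset.sum_add_distrib, Finset.sum_add_distrib]
    have hz1 : c (j+1+1) (j+1) = 0 := hc0 _ _ (by omega)
    have hz2 : c (j+1+1+1) (j+1) = 0 := hc0 _ _ (by omega)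
    have hz3 : c (j+2) (j+1) = 0 := hc0 _ _ (by omega)
    have e1 : ∑ m ∈ Finset.range (j+2),
          C ((if m = 0 then 0 else δ (m-1)) * c m (j+1)) * orthPoly γ δ (m-1)
        = ∑ m ∈ Finset.range (j+3), C (δ m * c (m+1) (j+1)) * orthPoly γ δ m := by
      rw [Finset.sum_range_succ' (fun m =>
        C ((if m = 0 then 0 else δ (m-1)) * c m (j+1)) * orthPoly γ δ (m-1)) (j+1)]
      conv_rhs => rw [show j+3 = (j+1)+1+1 from rfl, Finset.sum_range_succ,
        Finset.sum_range_succ]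
      rw [hz1, hz2]
      simp only [reduceIte, Nat.add_sub_cancel, Nat.succ_ne_zero, if_neg, zero_mul, C_0,
        mul_zero, add_zero]
    have e2 : ∑ m ∈ Finset.range (j+2), C (γ m * c m (j+1)) * orthPoly γ δ m
        = ∑ m ∈ Finset.range (j+3), C (γ m * c m (j+1)) * orthPoly γ δ m := by
      conv_rhs => rw [show j+3 = (j+2)+1 from rfl, Finset.sum_range_succ]
      rw [hz3]
      simp
    have e3 : ∑ m ∈ Finset.range (j+2), C (δ m * c m (j+1)) * orthPoly γ δ (m+1)
        = ∑ m ∈ Finset.range (j+3),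
            C (if m = 0 then 0 else δ (m-1) * c (m-1) (j+1)) * orthPoly γ δ m := by
      conv_rhs => rw [Finset.sum_range_succ' (fun m =>
        C (if m = 0 then 0 else δ (m-1) * c (m-1) (j+1)) * orthPoly γ δ m) (j+2)]
      simp only [reduceIte, Nat.add_sub_cancel, Nat.succ_ne_zero, if_neg, C_0, zero_mul,
        add_zero]
    have hsplit : ∑ m ∈ Finset.range (j+3), C (R m) * orthPoly γ δ m
        = (∑ m ∈ Finset.range (j+3),
            C (if m = 0 then 0 else δ (m-1) * c (m-1) (j+1)) * orthPoly γ δ m)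
          + (∑ m ∈ Finset.range (j+3), C (γ m * c m (j+1)) * orthPoly γ δ m)
          + (∑ m ∈ Finset.range (j+3), C (δ m * c (m+1) (j+1)) * orthPoly γ δ m) := by
      rw [← Finset.sum_add_distrib, ← Finset.sum_add_distrib]
      refine Finset.sum_congr rfl fun m _ => ?_
      simp only [hR, C_add]
      ring
    rw [hsplit, ← e1, ← e2, ← e3]
    ring
  -- subtract and extract coefficients
  have hzero : ∑ m ∈ Finset.range (j+3), C (L m - R m) * orthPoly γ δ m = 0 := by
    have heq := hLeq.symm.trans hReq
    have h2 : ∑ m ∈ Finset.range (j+3),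
        (C (L m) * orthPoly γ δ m - C (R m) * orthPoly γ δ m) = 0 := by
      rw [Finset.sum_sub_distrib, heq, sub_self]
    rw [← h2]
    refine Finset.sum_congr rfl fun m _ => ?_
    rw [C_sub, sub_mul]
  have hext := orthPoly_indep γ δ hδ (j+2) (fun m => L m - R m) hzero
  by_cases hcase : i + 1 ≤ j + 2
  · have h0 : L (i+1) - R (i+1) = 0 := hext (i+1) hcase
    have h' : L (i+1) = R (i+1) := by linarith
    simp only [hL, hR] at h'
    rw [if_neg (Nat.succ_ne_zero i), Nat.add_sub_cancel] at h'
    rw [show i+1+1 = i+2 from rfl] at h'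
    exact h'
  · rw [hc0 (i+1) j (by omega), hc0 (i+1) (j+1) (by omega), hc0 (i+1) (j+2) (by omega),
      hc0 i (j+1) (by omega), hc0 (i+2) (j+1) (by omega)]
    ring

end Key

section Diag
variable (α β γ δ : ℕ → ℝ)
  (c : ℕ → ℕ → ℝ)
  (hc : ∀ j, orthPoly α β j =
      ∑ i ∈ Finset.range (j+1), Polynomial.C (c i j) * orthPoly γ δ i)

include hc in
lemma diag : ∀ j, (∏ k ∈ Finset.range j, β k)⁻¹
    = c j j * (∏ k ∈ Finset.range j, δ k)⁻¹ := by
  intro j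
  have h := congrArg (fun p => p.coeff j) (hc j)
  simp only [finset_sum_coeff, coeff_C_mul] at h
  rw [(orthPoly_deg_coeff α β j).2, Finset.sum_range_succ,
    (orthPoly_deg_coeff γ δ j).2] at h
  rw [h, Finset.sum_eq_zero, zero_add]
  intro i hi
  rw [coeff_eq_zero_of_natDegree_lt
    (lt_of_le_of_lt (orthPoly_deg_coeff γ δ i).1 (Finset.mem_range.mp hi)), mul_zero]

end Diag

/-- If `J` and `D` have equal, Toeplitz entries outside the principal `n × n`
block (α_k = γ_k = α_n and β_{k−1} = δ_{k−1} = β_{n−1} for k ≥ n), then the connection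
coefficients satisfy `c_{i,j} = c_{i−1,j−1}` for all `i, j ≥ 1` with `i ≥ n`. -/
theorem stmt8 (α β γ δ : ℕ → ℝ) (hβ : ∀ k, 0 < β k) (hδ : ∀ k, 0 < δ k)
    (n : ℕ)
    (hdiag : ∀ k, n ≤ k → α k = α n ∧ γ k = α n)
    (hoff : ∀ k, n ≤ k + 1 → β k = β (n - 1) ∧ δ k = β (n - 1))
    (c : ℕ → ℕ → ℝ)
    (hc : ∀ j, orthPoly α β j =
      ∑ i ∈ Finset.range (j+1), Polynomial.C (c i j) * orthPoly γ δ i)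
    (hc0 : ∀ i j, j < i → c i j = 0) :
    ∀ i j : ℕ, n ≤ i + 1 → c (i+1) (j+1) = c i j := by
  have hβn : 0 < β (n-1) := hβ (n-1)
  -- the diagonal case
  have hdg : ∀ i, n ≤ i + 1 → c (i+1) (i+1) = c i i := by
    intro i hi
    have h1 := diag α β γ δ c hc i
    have h2 := diag α β γ δ c hc (i+1)
    rw [Finset.prod_range_succ, Finset.prod_range_succ, mul_inv, mul_inv, ← mul_assoc] at h2
    have hβi : β i = β (n-1) := (hoff i hi).1
    have hδi : δ i = β (n-1) := (hoff i hi).2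
    rw [h1, hβi, hδi] at h2
    have hprodδ : (∏ k ∈ Finset.range i, δ k) ≠ 0 :=
      ne_of_gt (Finset.prod_pos fun k _ => hδ k)
    have h4 := mul_right_cancel₀ (inv_ne_zero (ne_of_gt hβn)) h2
    have h5 := mul_right_cancel₀ (inv_ne_zero hprodδ) h4
    exact h5.symm
  -- main induction on j
  intro i j
  induction j generalizing i with
  | zero =>
    intro hi
    rcases Nat.lt_or_ge 0 i with h' | h'
    · rw [hc0 (i+1) 1 (by omega), hc0 i 0 (by omega)]
    · have : i = 0 := by omega
      subst this
      exact hdg 0 hi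
  | succ m ih =>
    intro hi
    rcases lt_trichotomy (m+1) i with h' | h' | h'
    · rw [hc0 (i+1) (m+2) (by omega), hc0 i (m+1) (by omega)]
    · subst h'
      exact hdg (m+1) hi
    · -- j = m+1 > i
      have hk := keyrec α β γ δ hβ hδ c hc hc0 m i
      have e1 : α (m+1) = α n := (hdiag (m+1) (by omega)).1
      have e2 : γ (i+1) = α n := (hdiag (i+1) hi).2
      have e3 : β m = β (n-1) := (hoff m (by omega)).1
      have e4 : β (m+1) = β (n-1) := (hoff (m+1) (by omega)).1
      have e5 : δ i = β (n-1) := (hoff i hi).2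
      have e6 : δ (i+1) = β (n-1) := (hoff (i+1) (by omega)).2
      have e7 : c (i+2) (m+1) = c (i+1) m := ih (i+1) (by omega)
      rw [e1, e2, e3, e4, e5, e6, e7] at hk
      have : β (n-1) * c (i+1) (m+2) = β (n-1) * c i (m+1) := by linarith
      exact mul_left_cancel₀ (ne_of_gt hβn) this
end
end

section
/- Let J be a Jacobi operator that is a Toeplitz-plus-finite-rank perturbation of Δ of size n, with connection coefficients c_{ij} and Toeplitz symbol c(z) = Σ_{k=0}^{2n−1} t_k z^k where t_k := c_{n,n+k}. Then for every z ∈ ℂ with z ≠ 0: Σ_{k=0}^{2n−1} (Σ_{j=0}^{2n−1} c_{kj} c_{0j}) · U_k((z + z^{-1})/2) = c(z)·c(z^{-1}). -/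
open Polynomial MeasureTheory Filter Topology

noncomputable section

set_option linter.unusedSectionVars false
set_option linter.unreachableTactic false
set_option linter.unusedTactic false

/-- Chebyshev polynomials of the second kind, realized as the orthonormal polynomials of the
free Jacobi operator `Δ` (with `α_k = 0`, `β_k = 1/2`):
`U 0 = 1`, `U 1 = 2X`, `U (k+2) = 2X * U (k+1) - U k`. -/
def chebU : ℕ → Polynomial ℝ := orthPoly (fun _ => 0) (fun _ => (1/2 : ℝ))

lemma two_step {P : ℕ → Prop} (h0 : P 0) (h1 : P 1)
    (h : ∀ k, P k → P (k+1) → P (k+2)) : ∀ k, P k := by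
  have key : ∀ k, P k ∧ P (k+1) := by
    intro k
    induction k with
    | zero => exact ⟨h0, h1⟩
    | succ m ih => exact ⟨ih.2, h m ih.1 ih.2⟩
  exact fun k => (key k).1

lemma chebU_zero : chebU 0 = 1 := rfl

lemma chebU_one : chebU 1 = C 2 * X := by
  show C ((1/2:ℝ))⁻¹ * (X - C (0:ℝ)) = C 2 * X
  norm_num

lemma chebU_add_two (k : ℕ) : chebU (k+2) = C 2 * (X * chebU (k+1)) - chebU k := by
  show C ((1/2:ℝ))⁻¹ * ((X - C (0:ℝ)) * chebU (k+1) - C (1/2:ℝ) * chebU k) = _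
  have h2 : C (((1/2:ℝ))⁻¹) = C (2:ℝ) := by norm_num
  have h3 : C (2:ℝ) * (C ((1/2:ℝ)) * chebU k) = chebU k := by
    rw [← mul_assoc, ← C_mul]; norm_num
  rw [h2, C_0, sub_zero, mul_sub, h3]

lemma chebU_natDegree_le : ∀ k, (chebU k).natDegree ≤ k := by
  refine two_step ?_ ?_ ?_
  · simp [chebU_zero]
  · rw [chebU_one]
    calc (C (2:ℝ) * X).natDegree ≤ (C (2:ℝ)).natDegree + X.natDegree := natDegree_mul_le
    _ ≤ 1 := by simp
  · intro k h1 h2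
    rw [chebU_add_two]
    refine le_trans (natDegree_sub_le _ _) (max_le ?_ (by omega))
    calc (C (2:ℝ) * (X * chebU (k+1))).natDegree ≤ (C (2:ℝ)).natDegree + (X * chebU (k+1)).natDegree := natDegree_mul_le
    _ ≤ 0 + (X.natDegree + (chebU (k+1)).natDegree) := by
        gcongr
        · simp
        · exact natDegree_mul_le
    _ ≤ k + 2 := by simp; omega

lemma chebU_coeff_lt {i m : ℕ} (h : i < m) : (chebU i).coeff m = 0 :=
  coeff_eq_zero_of_natDegree_lt (lt_of_le_of_lt (chebU_natDegree_le i) h)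

lemma chebU_coeff_self : ∀ k, (chebU k).coeff k = 2^k := by
  refine two_step ?_ ?_ ?_
  · simp [chebU_zero]
  · rw [chebU_one]
    simp [coeff_C_mul]
  · intro k h1 h2
    rw [chebU_add_two]
    rw [coeff_sub, coeff_C_mul, coeff_X_mul, h2, chebU_coeff_lt (by omega)]
    ring

lemma chebU_indep : ∀ (m : ℕ) (d : ℕ → ℝ),
    (∑ i ∈ Finset.range m, C (d i) * chebU i) = 0 → ∀ i, i < m → d i = 0 := by
  intro m
  induction m with
  | zero => intro d _ i hi; omega
  | succ m ih =>
    intro d hsum i hi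
    have htop : d m = 0 := by
      have := congrArg (fun p => p.coeff m) hsum
      simp only [finset_sum_coeff, coeff_C_mul, coeff_zero] at this
      rw [Finset.sum_range_succ, chebU_coeff_self] at this
      have hz : ∀ x ∈ Finset.range m, d x * (chebU x).coeff m = 0 := by
        intro x hx
        rw [chebU_coeff_lt (Finset.mem_range.1 hx), mul_zero]
      rw [Finset.sum_eq_zero hz, zero_add] at this
      have : d m * 2^m = 0 := this
      have h2 : (2:ℝ)^m ≠ 0 := by positivity
      exact (mul_eq_zero.1 this).resolve_right h2
    rcases Nat.lt_succ_iff_lt_or_eq.1 hi with h | h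
    · refine ih d ?_ i h
      rw [Finset.sum_range_succ, htop] at hsum
      simpa using hsum
    · rw [h]; exact htop

lemma chebU_indep' (m : ℕ) (d e : ℕ → ℝ)
    (h : (∑ i ∈ Finset.range m, C (d i) * chebU i) = ∑ i ∈ Finset.range m, C (e i) * chebU i) :
    ∀ i, i < m → d i = e i := by
  intro i hi
  have := chebU_indep m (fun i => d i - e i) ?_ i hi
  · have h' : d i - e i = 0 := this
    linarith
  · rw [← sub_eq_zero] at h
    rw [← h, ← Finset.sum_sub_distrib]
    congr 1
    ext j
    rw [C_sub]
    ring

lemma X_mul_chebU : ∀ i, X * chebU i = C (1/2:ℝ) * chebU (i+1)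
    + C (1/2:ℝ) * (if i = 0 then 0 else chebU (i-1)) := by
  intro i
  match i with
  | 0 =>
    rw [if_pos rfl, mul_zero, add_zero, chebU_zero, chebU_one, mul_one, ← mul_assoc, ← C_mul]
    norm_num
  | (i+1) =>
    rw [if_neg (Nat.succ_ne_zero i), Nat.add_sub_cancel, chebU_add_two, mul_sub,
      ← mul_assoc, ← C_mul]
    norm_num

lemma orthPoly_natDegree_le (a b : ℕ → ℝ) : ∀ j, (orthPoly a b j).natDegree ≤ j := by
  refine two_step ?_ ?_ ?_
  · simp [orthPoly]
  · show (C (b 0)⁻¹ * (X - C (a 0))).natDegree ≤ 1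
    refine le_trans natDegree_mul_le ?_
    rw [natDegree_C, zero_add, natDegree_X_sub_C]
  · intro k h1 h2
    show (C (b (k+1))⁻¹ * ((X - C (a (k+1))) * orthPoly a b (k+1)
        - C (b k) * orthPoly a b k)).natDegree ≤ k+2
    refine le_trans natDegree_mul_le ?_
    rw [natDegree_C, zero_add]
    refine le_trans (natDegree_sub_le _ _) (max_le ?_ ?_)
    · refine le_trans natDegree_mul_le ?_
      rw [natDegree_X_sub_C]
      omega
    · refine le_trans natDegree_mul_le ?_
      rw [natDegree_C, zero_add]
      omega

lemma orthPoly_coeff_lt (a b : ℕ → ℝ) {j m : ℕ} (h : j < m) : (orthPoly a b j).coeff m = 0 :=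
  coeff_eq_zero_of_natDegree_lt (lt_of_le_of_lt (orthPoly_natDegree_le a b j) h)

lemma orthPoly_coeff_self (a b : ℕ → ℝ) :
    ∀ j, (orthPoly a b j).coeff j = ∏ m ∈ Finset.range j, (b m)⁻¹ := by
  refine two_step ?_ ?_ ?_
  · simp [orthPoly]
  · show (C (b 0)⁻¹ * (X - C (a 0))).coeff 1 = _
    rw [coeff_C_mul, coeff_sub, coeff_X_one, coeff_C]
    simp
  · intro k h1 h2
    show (C (b (k+1))⁻¹ * ((X - C (a (k+1))) * orthPoly a b (k+1)
        - C (b k) * orthPoly a b k)).coeff (k+2) = _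
    rw [coeff_C_mul, coeff_sub, sub_mul, coeff_sub, coeff_X_mul, coeff_C_mul, coeff_C_mul,
      h2, orthPoly_coeff_lt a b (by omega : k+1 < k+2), orthPoly_coeff_lt a b (by omega : k < k+2)]
    simp only [show (2:ℕ)+k = k+1+1 from by omega, show (1:ℕ)+k = k+1 from by omega,
      Finset.prod_range_succ]
    ring

lemma orthPoly_rec_zero (a b : ℕ → ℝ) (hb : b 0 ≠ 0) :
    X * orthPoly a b 0 = C (a 0) * orthPoly a b 0 + C (b 0) * orthPoly a b 1 := by
  show X * 1 = C (a 0) * 1 + C (b 0) * (C (b 0)⁻¹ * (X - C (a 0)))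
  rw [← mul_assoc, ← C_mul, mul_inv_cancel₀ hb, C_1, one_mul]
  ring

lemma orthPoly_rec_succ (a b : ℕ → ℝ) (hb : ∀ k, b k ≠ 0) (j : ℕ) :
    X * orthPoly a b (j+1) = C (b j) * orthPoly a b j + C (a (j+1)) * orthPoly a b (j+1)
      + C (b (j+1)) * orthPoly a b (j+2) := by
  have h : C (b (j+1)) * orthPoly a b (j+2)
      = (X - C (a (j+1))) * orthPoly a b (j+1) - C (b j) * orthPoly a b j := by
    show C (b (j+1)) * (C (b (j+1))⁻¹ * _) = _
    rw [← mul_assoc, ← C_mul, mul_inv_cancel₀ (hb (j+1)), C_1, one_mul]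
  rw [h]
  ring

def Mm (c : ℕ → ℕ → ℝ) (n : ℕ) (a b : ℕ) : ℝ := ∑ j ∈ Finset.range (30*n+30), c a j * c b j

section main

variable {α β : ℕ → ℝ} {n : ℕ} {c : ℕ → ℕ → ℝ}
variable (hβ : ∀ k, 0 < β k)
  (hα : ∀ k, n ≤ k → α k = 0) (hβ2 : ∀ k, n ≤ k + 1 → β k = 1/2)
  (hc : ∀ j, orthPoly α β j = ∑ i ∈ Finset.range (j+1), C (c i j) * chebU i)
  (hc0 : ∀ i j, j < i → c i j = 0)

include hc hc0 in
lemma hpad (j M : ℕ) (hM : j+1 ≤ M) :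
    orthPoly α β j = ∑ i ∈ Finset.range M, C (c i j) * chebU i := by
  rw [hc j]
  refine Finset.sum_subset (Finset.range_subset_range.2 hM) ?_
  intro x hx hnx
  have hx' : j < x := by
    simp only [Finset.mem_range] at hx hnx; omega
  rw [hc0 _ _ hx', map_zero, zero_mul]

include hβ hc hc0 in
lemma crec (j i : ℕ) :
    (1/2) * (if i = 0 then 0 else c (i-1) j) + (1/2) * c (i+1) j
      = (if j = 0 then 0 else β (j-1) * c i (j-1)) + α j * c i j + β j * c i (j+1) := by
  have clA : X * orthPoly α β j = ∑ x ∈ Finset.range (j+2+1),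
      C ((1/2) * (if x = 0 then 0 else c (x-1) j) + (1/2) * c (x+1) j) * chebU x := by
    rw [hpad hc hc0 j (j+2+1) (by omega), Finset.mul_sum]
    have step1 : ∀ x ∈ Finset.range (j+2+1), X * (C (c x j) * chebU x)
        = C ((1/2) * c x j) * chebU (x+1)
          + (if x = 0 then 0 else C ((1/2) * c x j) * chebU (x-1)) := by
      intro x _
      rw [mul_left_comm, X_mul_chebU x]
      by_cases h : x = 0
      · rw [if_pos h, if_pos h, mul_zero, add_zero, add_zero, ← mul_assoc, ← C_mul]
        ring_nf
      · rw [if_neg h, if_neg h, mul_add, ← mul_assoc, ← C_mul, ← mul_assoc, ← C_mul]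
        ring_nf
    rw [Finset.sum_congr rfl step1, Finset.sum_add_distrib]
    have hS1 : (∑ x ∈ Finset.range (j+2+1), C ((1/2) * c x j) * chebU (x+1))
        = ∑ x ∈ Finset.range (j+2+1),
            C ((1/2) * (if x = 0 then 0 else c (x-1) j)) * chebU x := by
      rw [Finset.sum_range_succ (fun x => C ((1/2) * c x j) * chebU (x+1)) (j+2)]
      rw [Finset.sum_range_succ' (fun x => C ((1/2) * (if x = 0 then 0 else c (x-1) j)) * chebU x) (j+2)]
      rw [hc0 (j+2) j (by omega)]
      simp
    have hS2 : (∑ x ∈ Finset.range (j+2+1),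
          if x = 0 then 0 else C ((1/2) * c x j) * chebU (x-1))
        = ∑ x ∈ Finset.range (j+2+1), C ((1/2) * c (x+1) j) * chebU x := by
      rw [Finset.sum_range_succ' (fun x => if x = 0 then 0 else C ((1/2) * c x j) * chebU (x-1)) (j+2)]
      rw [Finset.sum_range_succ (fun x => C ((1/2) * c (x+1) j) * chebU x) (j+2)]
      rw [hc0 (j+2+1) j (by omega)]
      simp
    rw [hS1, hS2, ← Finset.sum_add_distrib]
    refine Finset.sum_congr rfl fun x _ => ?_
    rw [← add_mul, ← C_add]
  have clB : X * orthPoly α β j = ∑ x ∈ Finset.range (j+2+1),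
      C ((if j = 0 then 0 else β (j-1) * c x (j-1)) + α j * c x j + β j * c x (j+1)) * chebU x := by
    cases j with
    | zero =>
      rw [orthPoly_rec_zero α β (ne_of_gt (hβ 0))]
      rw [hpad hc hc0 0 (0+2+1) (by omega), hpad hc hc0 1 (0+2+1) (by omega)]
      rw [Finset.mul_sum, Finset.mul_sum, ← Finset.sum_add_distrib]
      refine Finset.sum_congr rfl fun x _ => ?_
      rw [if_pos rfl, ← mul_assoc, ← C_mul, ← mul_assoc, ← C_mul, ← add_mul, ← C_add]
      ring_nf
    | succ j' =>
      rw [orthPoly_rec_succ α β (fun k => ne_of_gt (hβ k)) j']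
      rw [hpad hc hc0 j' (j'+1+2+1) (by omega), hpad hc hc0 (j'+1) (j'+1+2+1) (by omega),
        hpad hc hc0 (j'+2) (j'+1+2+1) (by omega)]
      rw [Finset.mul_sum, Finset.mul_sum, Finset.mul_sum, ← Finset.sum_add_distrib,
        ← Finset.sum_add_distrib]
      refine Finset.sum_congr rfl fun x _ => ?_
      rw [if_neg (Nat.succ_ne_zero j'), Nat.add_sub_cancel,
        ← mul_assoc, ← C_mul, ← mul_assoc, ← C_mul, ← mul_assoc, ← C_mul,
        ← add_mul, ← C_add, ← add_mul, ← C_add]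
  have heq := chebU_indep' (j+2+1) _ _ (clA.symm.trans clB)
  by_cases hi : i < j+2+1
  · exact heq i hi
  · push_neg at hi
    rw [hc0 (i-1) j (by omega), hc0 (i+1) j (by omega), hc0 i j (by omega),
      hc0 i (j+1) (by omega), hc0 i (j-1) (by omega)]
    by_cases hj : j = 0 <;> by_cases hi0 : i = 0 <;> simp [hj, hi0]

include hβ hα hβ2 hc hc0 in
lemma crec' (hn : 1 ≤ n) (j i : ℕ) (hj : n ≤ j) :
    (if i = 0 then 0 else c (i-1) j) + c (i+1) j = c i (j-1) + c i (j+1) := by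
  have h := crec hβ hc hc0 j i
  rw [if_neg (by omega : ¬ j = 0), hβ2 (j-1) (by omega), hβ2 j (by omega), hα j hj] at h
  by_cases hi : i = 0
  · rw [if_pos hi] at h ⊢; linarith
  · rw [if_neg hi] at h ⊢; linarith

include hc hc0 in
lemma cdiag (j : ℕ) : c j j * 2^j = ∏ m ∈ Finset.range j, (β m)⁻¹ := by
  have h := congrArg (fun p => p.coeff j) (hc j)
  simp only [finset_sum_coeff, coeff_C_mul] at h
  rw [orthPoly_coeff_self, Finset.sum_range_succ, chebU_coeff_self] at h
  rw [Finset.sum_eq_zero (fun x hx => by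
    rw [chebU_coeff_lt (Finset.mem_range.1 hx), mul_zero]), zero_add] at h
  linarith [h]

include hβ hβ2 hc hc0 in
lemma cdiag_eq (hn : 1 ≤ n) : c n n = c (n-1) (n-1) := by
  have h1 := cdiag (β := β) hc hc0 n
  have h2 := cdiag (β := β) hc hc0 (n-1)
  have hsub : n - 1 + 1 = n := by omega
  have hprod : (∏ m ∈ Finset.range n, (β m)⁻¹)
      = (∏ m ∈ Finset.range (n-1), (β m)⁻¹) * (β (n-1))⁻¹ := by
    rw [← hsub, Finset.prod_range_succ, hsub]
  rw [hβ2 (n-1) (by omega)] at hprod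
  have hpow : (2:ℝ)^n = 2^(n-1) * 2 := by rw [← pow_succ, hsub]
  have key : c n n * 2^n = c (n-1) (n-1) * 2^n := by
    rw [h1, hprod, ← h2, hpow]
    norm_num
    ring
  have h2n : (2:ℝ)^n ≠ 0 := by positivity
  exact mul_right_cancel₀ h2n key

include hβ hα hβ2 hc hc0 in
lemma ctoep (hn : 1 ≤ n) : ∀ j i, 2*n ≤ i + j + 2 → c (i+1) (j+1) = c i j := by
  intro j
  induction j using Nat.strong_induction_on with
  | _ j IH =>
    intro i hij
    rcases lt_trichotomy j (n-1) with h | h | h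
    · rw [hc0 (i+1) (j+1) (by omega), hc0 i j (by omega)]
    · subst h
      by_cases h' : i = n-1
      · subst h'
        rw [show n-1+1 = n from by omega]
        exact cdiag_eq hβ hβ2 hc hc0 hn
      · rw [hc0 (i+1) (n-1+1) (by omega), hc0 i (n-1) (by omega)]
    · have hrec := crec' hβ hα hβ2 hc hc0 hn j (i+1) (by omega)
      rw [if_neg (Nat.succ_ne_zero i), Nat.add_sub_cancel] at hrec
      have hIH := IH (j-1) (by omega) (i+1) (by omega)
      rw [show j-1+1 = j from by omega] at hIH
      -- hIH : c (i+2) j = c (i+1) (j-1)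
      -- hrec : c i j + c (i+2) j = c (i+1) (j-1) + c (i+1) (j+1)
      have : c i j + c (i+1+1) j = c (i+1) (j-1) + c (i+1) (j+1) := hrec
      rw [show i+1+1 = i+2 from rfl, hIH] at this
      linarith

include hβ hα hβ2 hc hc0 in
lemma band0 (hn : 1 ≤ n) : ∀ m, 2*n ≤ m → c 0 m = 0 := by
  intro m hm
  obtain ⟨j, rfl⟩ : ∃ j, m = j + 1 := ⟨m-1, by omega⟩
  have h := crec' hβ hα hβ2 hc hc0 hn j 0 (by omega)
  rw [if_pos rfl, zero_add] at h
  have ht : c 1 j = c 0 (j-1) := by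
    obtain ⟨j', rfl⟩ : ∃ j', j = j' + 1 := ⟨j-1, by omega⟩
    have h2 := ctoep hβ hα hβ2 hc hc0 hn j' 0 (by omega)
    simpa using h2
  rw [ht] at h
  linarith

include hβ hα hβ2 hc hc0 in
lemma band (hn : 1 ≤ n) : ∀ i m, i + 2*n ≤ m → c i m = 0 := by
  intro i
  induction i with
  | zero => exact fun m hm => band0 hβ hα hβ2 hc hc0 hn m (by omega)
  | succ i ih =>
    intro m hm
    obtain ⟨m', rfl⟩ : ∃ m', m = m' + 1 := ⟨m-1, by omega⟩
    rw [ctoep hβ hα hβ2 hc hc0 hn m' i (by omega)]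
    exact ih m' (by omega)

include hβ hα hβ2 hc hc0 in
lemma trow (hn : 1 ≤ n) : ∀ m j, c (n+m) j = if n + m ≤ j then c n (j - m) else 0 := by
  intro m
  induction m with
  | zero =>
    intro j
    by_cases h : n ≤ j
    · rw [if_pos (by omega)]
      simp
    · rw [if_neg (by omega), hc0 _ _ (by omega)]
  | succ m ih =>
    intro j
    by_cases h : n + (m + 1) ≤ j
    · rw [if_pos h]
      obtain ⟨j', rfl⟩ : ∃ j', j = j' + 1 := ⟨j-1, by omega⟩
      have hT := ctoep hβ hα hβ2 hc hc0 hn j' (n+m) (by omega)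
      rw [show n+(m+1) = (n+m)+1 from rfl, hT, ih j', if_pos (by omega)]
      congr 1
      omega
    · rw [if_neg h, hc0 _ _ (by omega)]

include hβ hα hβ2 hc hc0 in
lemma Mwave (hn : 1 ≤ n) (i k : ℕ) (hi : i ≤ 20*n+20) (hk : k ≤ 20*n+20) :
    (if i = 0 then 0 else Mm c n (i-1) k) + Mm c n (i+1) k
      = (if k = 0 then 0 else Mm c n i (k-1)) + Mm c n i (k+1) := by
  have key : ∀ p q : ℕ, p ≤ 20*n+20 →
      (if p = 0 then 0 else Mm c n (p-1) q) + Mm c n (p+1) q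
        = 2 * ((∑ j ∈ Finset.range (30*n+30), α j * c p j * c q j)
          + ∑ j ∈ Finset.range (30*n+30),
              β j * (c p (j+1) * c q j + c p j * c q (j+1))) := by
    intro p q hp
    have lhs_eq : (if p = 0 then 0 else Mm c n (p-1) q) + Mm c n (p+1) q
        = ∑ j ∈ Finset.range (30*n+30),
            ((if p = 0 then 0 else c (p-1) j) + c (p+1) j) * c q j := by
      by_cases hp0 : p = 0 <;>
        simp [hp0, Mm, Finset.sum_add_distrib, add_mul]
    have point : ∀ j ∈ Finset.range (30*n+30),
        ((if p = 0 then 0 else c (p-1) j) + c (p+1) j) * c q j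
          = 2 * ((if j = 0 then 0 else β (j-1) * c p (j-1)) * c q j
            + α j * c p j * c q j + β j * (c p (j+1) * c q j)) := by
      intro j _
      have h := crec hβ hc hc0 j p
      linear_combination (2 * c q j) * h
    rw [lhs_eq, Finset.sum_congr rfl point]
    have hsplit : ∑ j ∈ Finset.range (30*n+30),
        (2 * ((if j = 0 then 0 else β (j-1) * c p (j-1)) * c q j
            + α j * c p j * c q j + β j * (c p (j+1) * c q j)))
        = 2 * ((∑ j ∈ Finset.range (30*n+30), (if j = 0 then 0 else β (j-1) * c p (j-1)) * c q j)
          + (∑ j ∈ Finset.range (30*n+30), α j * c p j * c q j)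
          + ∑ j ∈ Finset.range (30*n+30), β j * (c p (j+1) * c q j)) := by
      rw [← Finset.sum_add_distrib, ← Finset.sum_add_distrib, ← Finset.mul_sum]
    rw [hsplit]
    have hshift : (∑ j ∈ Finset.range (30*n+30), (if j = 0 then 0 else β (j-1) * c p (j-1)) * c q j)
        = ∑ j ∈ Finset.range (30*n+30), β j * (c p j * c q (j+1)) := by
      rw [Finset.sum_range_succ' (fun j => (if j = 0 then 0 else β (j-1) * c p (j-1)) * c q j) (30*n+29)]
      rw [Finset.sum_range_succ (fun j => β j * (c p j * c q (j+1))) (30*n+29)]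
      rw [band hβ hα hβ2 hc hc0 hn p (30*n+29) (by omega)]
      simp only [if_pos rfl, zero_mul, add_zero, mul_zero, zero_add]
      rw [Finset.sum_congr rfl (fun x (_ : x ∈ Finset.range (30*n+29)) => by
        rw [if_neg (Nat.succ_ne_zero x), Nat.add_sub_cancel, mul_assoc])]
      simp
    rw [hshift]
    rw [show (∑ j ∈ Finset.range (30*n+30), β j * (c p (j+1) * c q j + c p j * c q (j+1)))
        = (∑ j ∈ Finset.range (30*n+30), β j * (c p (j+1) * c q j))
          + ∑ j ∈ Finset.range (30*n+30), β j * (c p j * c q (j+1)) from by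
      rw [← Finset.sum_add_distrib]
      exact Finset.sum_congr rfl fun j _ => by ring]
    ring
  have msymm : ∀ a b, Mm c n a b = Mm c n b a := fun a b =>
    Finset.sum_congr rfl (fun j _ => mul_comm _ _)
  have hrhs : (if k = 0 then 0 else Mm c n i (k-1)) + Mm c n i (k+1)
      = (if k = 0 then 0 else Mm c n (k-1) i) + Mm c n (k+1) i := by
    rw [msymm i (k+1)]
    by_cases hk0 : k = 0
    · rw [if_pos hk0, if_pos hk0]
    · rw [if_neg hk0, if_neg hk0, msymm i (k-1)]
  rw [key i k hi, hrhs, key k i hk]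
  have s1 : (∑ j ∈ Finset.range (30*n+30), α j * c k j * c i j)
      = ∑ j ∈ Finset.range (30*n+30), α j * c i j * c k j :=
    Finset.sum_congr rfl fun j _ => by ring
  have s2 : (∑ j ∈ Finset.range (30*n+30), β j * (c k (j+1) * c i j + c k j * c i (j+1)))
      = ∑ j ∈ Finset.range (30*n+30), β j * (c i (j+1) * c k j + c i j * c k (j+1)) :=
    Finset.sum_congr rfl fun j _ => by ring
  rw [s1, s2]

include hβ hα hβ2 hc hc0 in
lemma Mdiag (hn : 1 ≤ n) : ∀ a, ∀ k, 2*a + k ≤ 15*n →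
    Mm c n a (a+k) = ∑ r ∈ Finset.range (a+1), Mm c n 0 (k+2*r) := by
  intro a
  induction a using Nat.strong_induction_on with
  | _ a IH =>
    match a with
    | 0 =>
      intro k hk
      simp
    | Nat.succ a =>
      intro k hk
      have hw := Mwave hβ hα hβ2 hc hc0 hn a (a+k+1) (by omega) (by omega)
      rw [if_neg (show ¬ a+k+1 = 0 by omega)] at hw
      rw [show a+k+1-1 = a+k from by omega, show a+k+1+1 = a+(k+2) from by omega] at hw
      rw [IH a (by omega) k (by omega), IH a (by omega) (k+2) (by omega)] at hw
      rw [show a+1+k = a+k+1 from by omega]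
      rcases Nat.eq_zero_or_pos a with ha | ha
      · subst ha
        rw [if_pos rfl, zero_add] at hw
        rw [hw]
        simp [Finset.sum_range_succ]
      · obtain ⟨a', rfl⟩ : ∃ a', a = a'+1 := ⟨a-1, by omega⟩
        rw [if_neg (by omega : ¬ a'+1 = 0), Nat.add_sub_cancel] at hw
        rw [show Mm c n a' (a'+1+k+1) = Mm c n a' (a'+(k+2)) from by
              rw [show a'+1+k+1 = a'+(k+2) from by omega],
            IH a' (by omega) (k+2) (by omega)] at hw
        have e1 : (∑ r ∈ Finset.range (a'+1+1+1), Mm c n 0 (k+2*r))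
            = (∑ r ∈ Finset.range (a'+1+1), Mm c n 0 (k+2*r)) + Mm c n 0 (k+2*(a'+1+1)) :=
          Finset.sum_range_succ _ _
        have e2 : (∑ r ∈ Finset.range (a'+1+1), Mm c n 0 (k+2+2*r))
            = (∑ r ∈ Finset.range (a'+1), Mm c n 0 (k+2+2*r)) + Mm c n 0 (k+2+2*(a'+1)) :=
          Finset.sum_range_succ _ _
        rw [show k+2*(a'+1+1) = k+2+2*(a'+1) from by omega] at e1
        linarith [hw, e1, e2]

include hβ hα hβ2 hc hc0 in
lemma MB (hn : 1 ≤ n) (k : ℕ) (hk : k ≤ 2*n+2) :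
    Mm c n (3*n) (3*n+k) = ∑ l ∈ Finset.range (2*n), c n (n+(l+k)) * c n (n+l) := by
  have e1 : ∀ j, c (3*n) j = if 3*n ≤ j then c n (j - 2*n) else 0 := by
    intro j
    have h := trow hβ hα hβ2 hc hc0 hn (2*n) j
    rw [show n + 2*n = 3*n from by omega] at h
    exact h
  have e2 : ∀ j, c (3*n+k) j = if 3*n+k ≤ j then c n (j - (2*n+k)) else 0 := by
    intro j
    have h := trow hβ hα hβ2 hc hc0 hn (2*n+k) j
    rw [show n + (2*n+k) = 3*n+k from by omega] at h
    exact h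
  have step1 : Mm c n (3*n) (3*n+k)
      = ∑ j ∈ Finset.Ico (3*n+k) (30*n+30), c (3*n) j * c (3*n+k) j := by
    rw [Mm, Finset.range_eq_Ico]
    symm
    apply Finset.sum_subset
    · intro x hx
      simp only [Finset.mem_Ico] at hx ⊢
      omega
    · intro x hx hnx
      simp only [Finset.mem_Ico] at hx hnx
      rw [hc0 (3*n+k) x (by omega), mul_zero]
  have step2 : (∑ j ∈ Finset.Ico (3*n+k) (30*n+30), c (3*n) j * c (3*n+k) j)
      = ∑ j ∈ Finset.Ico (3*n+k) (30*n+30), c n (j - 2*n) * c n (j - (2*n+k)) := by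
    refine Finset.sum_congr rfl fun j hj => ?_
    simp only [Finset.mem_Ico] at hj
    rw [e1 j, e2 j, if_pos (by omega), if_pos (by omega)]
  rw [step1, step2, Finset.sum_Ico_eq_sum_range]
  have step3 : (∑ r ∈ Finset.range (30*n+30 - (3*n+k)), c n (3*n+k+r - 2*n) * c n (3*n+k+r - (2*n+k)))
      = ∑ r ∈ Finset.range (30*n+30 - (3*n+k)), c n (n+(r+k)) * c n (n+r) := by
    refine Finset.sum_congr rfl fun r _ => ?_
    rw [show 3*n+k+r-2*n = n+(r+k) from by omega, show 3*n+k+r-(2*n+k) = n+r from by omega]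
  rw [step3]
  symm
  apply Finset.sum_subset
  · exact Finset.range_subset_range.2 (by omega)
  · intro x hx hnx
    simp only [Finset.mem_range] at hnx
    rw [band hβ hα hβ2 hc hc0 hn n (n+x) (by omega), mul_zero]

include hβ hα hβ2 hc hc0 in
lemma AB (hn : 1 ≤ n) (k : ℕ) (hk : k < 2*n) :
    (∑ j ∈ Finset.range (2*n), c k j * c 0 j)
      = (∑ l ∈ Finset.range (2*n), c n (n+(l+k)) * c n (n+l))
        - ∑ l ∈ Finset.range (2*n), c n (n+(l+(k+2))) * c n (n+l) := by
  have hAz : Mm c n 0 k = ∑ j ∈ Finset.range (2*n), c k j * c 0 j := by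
    have hcomm : (∑ j ∈ Finset.range (2*n), c k j * c 0 j)
        = ∑ j ∈ Finset.range (2*n), c 0 j * c k j :=
      Finset.sum_congr rfl fun j _ => mul_comm _ _
    rw [hcomm, Mm]
    symm
    apply Finset.sum_subset (Finset.range_subset_range.2 (by omega))
    intro x hx hnx
    simp only [Finset.mem_range] at hnx
    rw [band0 hβ hα hβ2 hc hc0 hn x (by omega), zero_mul]
  have hAz0 : ∀ m, 2*n ≤ m → Mm c n 0 m = 0 := by
    intro m hm
    rw [Mm]
    apply Finset.sum_eq_zero
    intro j hj
    by_cases hjm : j < m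
    · rw [hc0 m j hjm, mul_zero]
    · rw [band0 hβ hα hβ2 hc hc0 hn j (by omega), zero_mul]
  have h1 := Mdiag hβ hα hβ2 hc hc0 hn (3*n) k (by omega)
  have h2 := Mdiag hβ hα hβ2 hc hc0 hn (3*n) (k+2) (by omega)
  rw [MB hβ hα hβ2 hc hc0 hn k (by omega)] at h1
  rw [MB hβ hα hβ2 hc hc0 hn (k+2) (by omega)] at h2
  have e1 : (∑ r ∈ Finset.range (3*n+1), Mm c n 0 (k+2*r))
      = Mm c n 0 k + ∑ r ∈ Finset.range (3*n), Mm c n 0 (k+2+2*r) := by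
    rw [Finset.sum_range_succ' (fun r => Mm c n 0 (k+2*r)) (3*n)]
    rw [Finset.sum_congr rfl (fun r (_ : r ∈ Finset.range (3*n)) => by
      rw [show k+2*(r+1) = k+2+2*r from by omega])]
    rw [show k+2*0 = k from by omega]
    ring
  have e2 : (∑ r ∈ Finset.range (3*n+1), Mm c n 0 (k+2+2*r))
      = (∑ r ∈ Finset.range (3*n), Mm c n 0 (k+2+2*r)) + Mm c n 0 (k+2+2*(3*n)) :=
    Finset.sum_range_succ _ _
  rw [e1] at h1
  rw [e2, hAz0 (k+2+2*(3*n)) (by omega), add_zero] at h2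
  rw [← hAz]
  linarith [h1, h2]

end main

lemma endgame (m : ℕ) (z : ℂ) (hz : z ≠ 0)
    (u t A : ℕ → ℂ)
    (hu0 : u 0 = 1) (hu1 : u 1 = z + z⁻¹)
    (hurec : ∀ k, u (k+2) = (z + z⁻¹) * u (k+1) - u k)
    (ht0 : ∀ j, m+1+1 ≤ j → t j = 0)
    (hA : ∀ k, k < m+1+1 → A k = (∑ l ∈ Finset.range (m+1+1), t (l+k) * t l)
      - ∑ l ∈ Finset.range (m+1+1), t (l+(k+2)) * t l) :
    ∑ k ∈ Finset.range (m+1+1), A k * u k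
      = (∑ k ∈ Finset.range (m+1+1), t k * z^k)
        * (∑ k ∈ Finset.range (m+1+1), t k * (z⁻¹)^k) := by
  have hzi : z * z⁻¹ = 1 := mul_inv_cancel₀ hz
  have udiff : ∀ k, u (k+2) - u k = z^(k+2) + (z⁻¹)^(k+2) := by
    refine two_step ?_ ?_ ?_
    · rw [hurec 0, hu1, hu0]
      linear_combination (2:ℂ) * hzi
    · rw [hurec 1, show (1:ℕ)+1 = 0+2 from rfl, hurec 0, show (0:ℕ)+1 = 1 from rfl, hu1, hu0]
      linear_combination (3*(z+z⁻¹)) * hzi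
    · intro k ih1 ih2
      have h1 := hurec (k+2)
      have h2 := hurec k
      linear_combination h1 + (z+z⁻¹) * ih2 - h2 - ih1 + (z^(k+2)+(z⁻¹)^(k+2)) * hzi
  have inner : ∀ l : ℕ,
      (∑ k ∈ Finset.range (m+1+1), t (l+k) * u k)
        - (∑ k ∈ Finset.range (m+1+1), t (l+(k+2)) * u k)
      = (∑ k ∈ Finset.range (m+1+1), t (l+k) * (z^k + (z⁻¹)^k)) - t l := by
    intro l
    rw [Finset.sum_range_succ' (fun k => t (l+k) * u k) (m+1),
      Finset.sum_range_succ' (fun k => t (l+(k+1)) * u (k+1)) m,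
      Finset.sum_range_succ (fun k => t (l+(k+2)) * u k) (m+1),
      Finset.sum_range_succ (fun k => t (l+(k+2)) * u k) m,
      Finset.sum_range_succ' (fun k => t (l+k) * (z^k + (z⁻¹)^k)) (m+1),
      Finset.sum_range_succ' (fun k => t (l+(k+1)) * (z^(k+1) + (z⁻¹)^(k+1))) m,
      ht0 (l+(m+2)) (by omega), ht0 (l+(m+1+2)) (by omega)]
    have hcomb : (∑ k ∈ Finset.range m, t (l+(k+1+1)) * u (k+1+1))
        - (∑ k ∈ Finset.range m, t (l+(k+2)) * u k)
        = ∑ k ∈ Finset.range m, t (l+(k+1+1)) * (z^(k+1+1) + (z⁻¹)^(k+1+1)) := by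
      rw [← Finset.sum_sub_distrib]
      refine Finset.sum_congr rfl fun k _ => ?_
      have h := udiff k
      rw [show k+1+1 = k+2 from rfl]
      linear_combination t (l+(k+2)) * h
    simp only [zero_add, add_zero, pow_zero, pow_one, zero_mul, hu0, hu1]
    linear_combination hcomb
  have rhs_split : (∑ a ∈ Finset.range (m+1+1), t a * z^a)
        * (∑ b ∈ Finset.range (m+1+1), t b * (z⁻¹)^b)
      = (∑ l ∈ Finset.range (m+1+1), ∑ k ∈ Finset.range (m+1+1), t (l+k) * t l * z^k)
        + (∑ l ∈ Finset.range (m+1+1), ∑ k ∈ Finset.range (m+1+1), t (l+k) * t l * (z⁻¹)^k)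
        - ∑ l ∈ Finset.range (m+1+1), t l * t l := by
    rw [Finset.sum_mul_sum]
    have piece1 : (∑ a ∈ Finset.range (m+1+1), ∑ b ∈ Finset.range (m+1+1),
          if b ≤ a then (t a * z^a) * (t b * (z⁻¹)^b) else 0)
        = ∑ l ∈ Finset.range (m+1+1), ∑ k ∈ Finset.range (m+1+1), t (l+k) * t l * z^k := by
      rw [Finset.sum_comm]
      refine Finset.sum_congr rfl fun b hb => ?_
      have hb' := Finset.mem_range.1 hb
      rw [← Finset.sum_filter]
      rw [show (Finset.range (m+1+1)).filter (fun a => b ≤ a) = Finset.Ico b (m+1+1) from by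
        ext x
        simp only [Finset.mem_Ico, Finset.mem_filter, Finset.mem_range]
        omega]
      rw [Finset.sum_Ico_eq_sum_range]
      rw [Finset.sum_congr rfl (fun k (_ : k ∈ Finset.range (m+1+1-b)) => by
        rw [pow_add, show (t (b+k) * (z^b * z^k)) * (t b * (z⁻¹)^b)
            = t (b+k) * t b * z^k * (z^b * (z⁻¹)^b) from by ring,
          ← mul_pow, hzi, one_pow, mul_one])]
      apply Finset.sum_subset (Finset.range_subset_range.2 (by omega))
      intro x hx hnx
      simp only [Finset.mem_range] at hnx
      rw [ht0 (b+x) (by omega), zero_mul, zero_mul]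
    have piece2 : (∑ a ∈ Finset.range (m+1+1), ∑ b ∈ Finset.range (m+1+1),
          if a ≤ b then (t a * z^a) * (t b * (z⁻¹)^b) else 0)
        = ∑ l ∈ Finset.range (m+1+1), ∑ k ∈ Finset.range (m+1+1), t (l+k) * t l * (z⁻¹)^k := by
      refine Finset.sum_congr rfl fun a ha => ?_
      have ha' := Finset.mem_range.1 ha
      rw [← Finset.sum_filter]
      rw [show (Finset.range (m+1+1)).filter (fun b => a ≤ b) = Finset.Ico a (m+1+1) from by
        ext x
        simp only [Finset.mem_Ico, Finset.mem_filter, Finset.mem_range]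
        omega]
      rw [Finset.sum_Ico_eq_sum_range]
      rw [Finset.sum_congr rfl (fun k (_ : k ∈ Finset.range (m+1+1-a)) => by
        rw [pow_add, show (t a * z^a) * (t (a+k) * ((z⁻¹)^a * (z⁻¹)^k))
            = t (a+k) * t a * (z⁻¹)^k * (z^a * (z⁻¹)^a) from by ring,
          ← mul_pow, hzi, one_pow, mul_one])]
      apply Finset.sum_subset (Finset.range_subset_range.2 (by omega))
      intro x hx hnx
      simp only [Finset.mem_range] at hnx
      rw [ht0 (a+x) (by omega), zero_mul, zero_mul]
    have pieceD : (∑ a ∈ Finset.range (m+1+1), ∑ b ∈ Finset.range (m+1+1),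
          if a = b then (t a * z^a) * (t b * (z⁻¹)^b) else 0)
        = ∑ a ∈ Finset.range (m+1+1), t a * t a := by
      refine Finset.sum_congr rfl fun a ha => ?_
      rw [Finset.sum_ite_eq (Finset.range (m+1+1)) a
          (fun b => (t a * z^a) * (t b * (z⁻¹)^b)), if_pos ha]
      rw [show (t a * z^a) * (t a * (z⁻¹)^a) = t a * t a * (z^a * (z⁻¹)^a) from by ring,
        ← mul_pow, hzi, one_pow, mul_one]
    calc (∑ a ∈ Finset.range (m+1+1), ∑ b ∈ Finset.range (m+1+1),
          (t a * z^a) * (t b * (z⁻¹)^b))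
        = ∑ a ∈ Finset.range (m+1+1), ∑ b ∈ Finset.range (m+1+1),
            ((if b ≤ a then (t a * z^a) * (t b * (z⁻¹)^b) else 0)
              + (if a ≤ b then (t a * z^a) * (t b * (z⁻¹)^b) else 0)
              - (if a = b then (t a * z^a) * (t b * (z⁻¹)^b) else 0)) := by
          refine Finset.sum_congr rfl fun a _ => Finset.sum_congr rfl fun b _ => ?_
          rcases lt_trichotomy a b with h | h | h
          · rw [if_neg (by omega), if_pos (by omega), if_neg (by omega)]; ring
          · rw [if_pos (by omega), if_pos (by omega), if_pos h]; ring
          · rw [if_pos (by omega), if_neg (by omega), if_neg (by omega)]; ring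
      _ = (∑ a ∈ Finset.range (m+1+1), ∑ b ∈ Finset.range (m+1+1),
            if b ≤ a then (t a * z^a) * (t b * (z⁻¹)^b) else 0)
          + (∑ a ∈ Finset.range (m+1+1), ∑ b ∈ Finset.range (m+1+1),
            if a ≤ b then (t a * z^a) * (t b * (z⁻¹)^b) else 0)
          - (∑ a ∈ Finset.range (m+1+1), ∑ b ∈ Finset.range (m+1+1),
            if a = b then (t a * z^a) * (t b * (z⁻¹)^b) else 0) := by
          simp only [Finset.sum_add_distrib, Finset.sum_sub_distrib]
      _ = _ := by rw [piece1, piece2, pieceD]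
  calc ∑ k ∈ Finset.range (m+1+1), A k * u k
      = ∑ k ∈ Finset.range (m+1+1), ∑ l ∈ Finset.range (m+1+1),
          (t (l+k) * t l * u k - t (l+(k+2)) * t l * u k) := by
        refine Finset.sum_congr rfl fun k hk => ?_
        rw [hA k (Finset.mem_range.1 hk), sub_mul, Finset.sum_mul, Finset.sum_mul,
          ← Finset.sum_sub_distrib]
        all_goals exact Finset.sum_congr rfl fun l _ => by ring
    _ = ∑ l ∈ Finset.range (m+1+1), ∑ k ∈ Finset.range (m+1+1),
          (t (l+k) * t l * u k - t (l+(k+2)) * t l * u k) := Finset.sum_comm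
    _ = ∑ l ∈ Finset.range (m+1+1), t l *
          ((∑ k ∈ Finset.range (m+1+1), t (l+k) * u k)
            - ∑ k ∈ Finset.range (m+1+1), t (l+(k+2)) * u k) := by
        refine Finset.sum_congr rfl fun l _ => ?_
        rw [mul_sub, Finset.mul_sum, Finset.mul_sum, ← Finset.sum_sub_distrib]
        refine Finset.sum_congr rfl fun k _ => ?_
        ring
    _ = ∑ l ∈ Finset.range (m+1+1), t l *
          ((∑ k ∈ Finset.range (m+1+1), t (l+k) * (z^k + (z⁻¹)^k)) - t l) := by
        refine Finset.sum_congr rfl fun l _ => ?_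
        rw [inner l]
    _ = (∑ l ∈ Finset.range (m+1+1), ∑ k ∈ Finset.range (m+1+1), t (l+k) * t l * z^k)
        + (∑ l ∈ Finset.range (m+1+1), ∑ k ∈ Finset.range (m+1+1), t (l+k) * t l * (z⁻¹)^k)
        - ∑ l ∈ Finset.range (m+1+1), t l * t l := by
        rw [← Finset.sum_add_distrib, ← Finset.sum_sub_distrib]
        refine Finset.sum_congr rfl fun l _ => ?_
        have hexp : t l * (∑ k ∈ Finset.range (m+1+1), t (l+k) * (z^k + (z⁻¹)^k))
            = (∑ k ∈ Finset.range (m+1+1), t (l+k) * t l * z^k)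
              + ∑ k ∈ Finset.range (m+1+1), t (l+k) * t l * (z⁻¹)^k := by
          rw [Finset.mul_sum, ← Finset.sum_add_distrib]
          exact Finset.sum_congr rfl fun k _ => by ring
        rw [mul_sub, hexp]
        all_goals ring
    _ = _ := rhs_split.symm

/-- Under the Joukowski substitution `λ(z) = (z + z⁻¹)/2`, the polynomial
`p_C = Σ_k (Σ_j c_{kj} c_{0j}) U_k` factorizes as `c(z) c(z⁻¹)` where
`c(z) = Σ_{k<2n} c_{n,n+k} z^k` is the Toeplitz symbol of `C_{J→Δ}`. -/
theorem stmt13 (α β : ℕ → ℝ) (hβ : ∀ k, 0 < β k) (n : ℕ)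
    (hα : ∀ k, n ≤ k → α k = 0) (hβ2 : ∀ k, n ≤ k + 1 → β k = 1/2)
    (c : ℕ → ℕ → ℝ)
    (hc : ∀ j, orthPoly α β j = ∑ i ∈ Finset.range (j+1), Polynomial.C (c i j) * chebU i)
    (hc0 : ∀ i j, j < i → c i j = 0) :
    ∀ z : ℂ, z ≠ 0 →
      ∑ k ∈ Finset.range (2*n),
          ((∑ j ∈ Finset.range (2*n), c k j * c 0 j : ℝ) : ℂ)
            * Polynomial.aeval ((z + z⁻¹)/2) (chebU k)
        = (∑ k ∈ Finset.range (2*n), (c n (n+k) : ℂ) * z ^ k)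
          * (∑ k ∈ Finset.range (2*n), (c n (n+k) : ℂ) * (z⁻¹) ^ k) := by
  intro z hz
  rcases Nat.eq_zero_or_pos n with hn0 | hn
  · subst hn0
    simp
  obtain ⟨m, hm⟩ : ∃ m, 2*n = m+1+1 := ⟨2*n-2, by omega⟩
  have key := endgame m z hz
    (fun k => (Polynomial.aeval ((z + z⁻¹)/2) (chebU k) : ℂ))
    (fun k => ((c n (n+k) : ℝ) : ℂ))
    (fun k => ((∑ j ∈ Finset.range (2*n), c k j * c 0 j : ℝ) : ℂ))
    (by simp [chebU_zero])
    (by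
      simp only [chebU_one]
      rw [map_mul, aeval_C, aeval_X]
      push_cast
      field_simp)
    (by
      intro k
      simp only [chebU_add_two, map_sub, map_mul, aeval_C, aeval_X]
      push_cast
      ring)
    (by
      intro j hj
      show ((c n (n+j) : ℝ) : ℂ) = 0
      rw [band hβ hα hβ2 hc hc0 hn n (n+j) (by omega)]
      norm_num)
    (by
      intro k hk
      rw [← hm] at hk
      show ((∑ j ∈ Finset.range (2*n), c k j * c 0 j : ℝ) : ℂ)
        = (∑ l ∈ Finset.range (m+1+1), ((c n (n+(l+k)) : ℝ) : ℂ) * ((c n (n+l) : ℝ) : ℂ))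
          - ∑ l ∈ Finset.range (m+1+1), ((c n (n+(l+(k+2))) : ℝ) : ℂ) * ((c n (n+l) : ℝ) : ℂ)
      rw [← hm]
      rw [AB hβ hα hβ2 hc hc0 hn k hk]
      push_cast
      ring)
  rw [hm] at key ⊢
  exact key

end
end
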